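/- arXiv:2312.14508 — 2 statements merged into one kernel-verified Lean document; each statement's English description precedes it below -/
import Mathlib

section
/- Let F be a subfield of the complex numbers such that F is a finitely generated field extension of the rationals, and let f, g : F → ℂ be two field homomorphisms. Then there exists a field automorphism α of ℂ such that g = α ∘ f. -/
/-!
Choose transcendence bases of `ℂ` over `F` for the two `F`-algebra structures given by `f` and
`g`. Since `F` is countable and `ℂ` is not, both bases have the cardinality of `ℂ`, so a bijection
between them extends to an `F`-isomorphism of the (polynomial) subalgebras they generate, and then
to one of their algebraic closures, which are both `ℂ`.
-/

open Cardinal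

universe u

theorem IntermediateField.FG.countable {K L : Type*} [Field K] [Field L] [Algebra K L]
    [Countable K] {S : IntermediateField K L} (hS : S.FG) : Countable S := by
  obtain ⟨s, rfl⟩ := hS
  rw [← mk_le_aleph0_iff, ← lift_le_aleph0]
  refine (IntermediateField.lift_cardinalMk_adjoin_le K (s : Set L)).trans ?_
  simp only [lift_le_aleph0, sup_le_iff, mk_le_aleph0, le_refl, and_self]

namespace IsAlgClosed

theorem nonempty_algEquiv_of_isTranscendenceBasis {R K L : Type*} [CommRing R] [Field K]
    [Field L] [Algebra R K] [Algebra R L] [IsAlgClosed K] [IsAlgClosed L] {ι κ : Type*}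
    {v : ι → K} {w : κ → L} (hv : IsTranscendenceBasis R v) (hw : IsTranscendenceBasis R w)
    (e : ι ≃ κ) : Nonempty (K ≃ₐ[R] L) := by
  let := isAlgClosure_of_transcendence_basis v hv
  let := isAlgClosure_of_transcendence_basis w hw
  let φ : Algebra.adjoin R (Set.range v) ≃ₐ[R] Algebra.adjoin R (Set.range w) :=
    hv.1.aevalEquiv.symm.trans ((MvPolynomial.renameEquiv R e).trans hw.1.aevalEquiv)
  refine ⟨AlgEquiv.ofRingEquiv (f := IsAlgClosure.equivOfEquiv K L φ.toRingEquiv) fun x => ?_⟩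
  rw [IsScalarTower.algebraMap_apply R (Algebra.adjoin R (Set.range v)) K,
    IsAlgClosure.equivOfEquiv_algebraMap, AlgEquiv.coe_ringEquiv, φ.commutes,
    ← IsScalarTower.algebraMap_apply]

theorem nonempty_algEquiv_of_cardinalMk_eq {F K L : Type u} [Field F] [Field K] [Field L]
    [Algebra F K] [Algebra F L] [IsAlgClosed K] [IsAlgClosed L] [Countable F]
    (hK : ℵ₀ < #K) (hKL : #K = #L) : Nonempty (K ≃ₐ[F] L) := by
  obtain ⟨s, hs⟩ := exists_isTranscendenceBasis F K
  obtain ⟨t, ht⟩ := exists_isTranscendenceBasis F L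
  have hst : #s = #t := by
    rw [← cardinal_eq_cardinal_transcendence_basis_of_aleph0_lt' _ hs mk_le_aleph0 hK,
      ← cardinal_eq_cardinal_transcendence_basis_of_aleph0_lt' _ ht mk_le_aleph0 (hKL ▸ hK), hKL]
  obtain ⟨e⟩ := Cardinal.eq.1 hst
  exact nonempty_algEquiv_of_isTranscendenceBasis hs ht e

theorem exists_ringEquiv_comp_eq_of_cardinalMk_eq {F K L : Type u} [Field F] [Field K]
    [Field L] [IsAlgClosed K] [IsAlgClosed L] [Countable F] (hK : ℵ₀ < #K) (hKL : #K = #L)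
    (i : F →+* K) (j : F →+* L) : ∃ ρ : K ≃+* L, ∀ x, ρ (i x) = j x := by
  let := i.toAlgebra
  let := j.toAlgebra
  obtain ⟨ρ⟩ := nonempty_algEquiv_of_cardinalMk_eq (F := F) hK hKL
  exact ⟨ρ.toRingEquiv, ρ.commutes⟩

end IsAlgClosed

/-- Let `F` be a subfield of `ℂ` that is a finitely generated field extension of `ℚ`,
and let `f, g : F → ℂ` be two field homomorphisms.  Then there exists a field
automorphism `α` of `ℂ` such that `g = α ∘ f`. -/
theorem exists_automorphism_comp_of_fg
    (F : IntermediateField ℚ ℂ) (hF : F.FG)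
    (f g : F →+* ℂ) :
    ∃ α : ℂ ≃+* ℂ, ∀ x : F, g x = α (f x) := by
  have := hF.countable
  have hℂ : ℵ₀ < #ℂ := mk_complex ▸ aleph0_lt_continuum
  obtain ⟨α, hα⟩ := IsAlgClosed.exists_ringEquiv_comp_eq_of_cardinalMk_eq hℂ rfl f g
  exact ⟨α, fun x => (hα x).symm⟩
end

section
/- Let (R, m) be a Noetherian local ring, M an R-module, and x₁, ..., x_d ∈ R a p-standard sequence on M. Then every element of the local cohomology module H⁰_{(x₁)}(M) is annihilated by the ideal (x₁, ..., x_d); in particular if x₁, ..., x_d is a system of parameters for R, then H⁰_{(x₁)}(M) = H⁰_m(H⁰_{(x₁)}(M)). -/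
universe u v

/-- `x₁, …, x_d` is a p-standard sequence on the `R`-module `M` (Kawasaki):
for all positive exponents `n₁, …, n_d`, every proper subset `Λ ⊊ {1,…,d}` and all
`i ≤ j` outside `Λ`, one has
`((x_λ^{n_λ})_{λ∈Λ} M :_M x_i^{n_i} x_j^{n_j}) = ((x_λ^{n_λ})_{λ∈Λ} M :_M x_j^{n_j})`. -/
def IsPStandardSeq {R : Type u} [CommRing R] {d : ℕ} (x : Fin d → R)
    (M : Type v) [AddCommGroup M] [Module R M] : Prop :=
  ∀ (n : Fin d → ℕ), (∀ i, 0 < n i) →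
    ∀ (Λ : Finset (Fin d)), Λ ≠ Finset.univ →
      ∀ i j : Fin d, i ∉ Λ → j ∉ Λ → i ≤ j →
        Submodule.comap (LinearMap.lsmul R M (x i ^ n i * x j ^ n j))
            ((Ideal.span ((fun l => x l ^ n l) '' (Λ : Set (Fin d)))) • (⊤ : Submodule R M)) =
          Submodule.comap (LinearMap.lsmul R M (x j ^ n j))
            ((Ideal.span ((fun l => x l ^ n l) '' (Λ : Set (Fin d)))) • (⊤ : Submodule R M))

/-- Let `(R, m)` be a Noetherian local ring, `M` an `R`-module and `x₁,…,x_d` a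
p-standard sequence on `M`.  Then every element of `H⁰_{(x₁)}(M)` (that is, every `m ∈ M`
killed by a power of `x₁`) is annihilated by the ideal `(x₁, …, x_d)`; in particular,
if `x₁, …, x_d` is a system of parameters for `R`, then
`H⁰_{(x₁)}(M) = H⁰_m(H⁰_{(x₁)}(M))`, i.e. every such element is killed by a power of the
maximal ideal. -/
theorem pStandard_H0_annihilated {R : Type u} [CommRing R] [IsNoetherianRing R]
    [IsLocalRing R] {d : ℕ} (hd : 0 < d) (x : Fin d → R)
    (M : Type v) [AddCommGroup M] [Module R M]
    (hx : IsPStandardSeq x M) :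
    (∀ m : M, (∃ k : ℕ, x ⟨0, hd⟩ ^ k • m = 0) → ∀ i : Fin d, x i • m = 0) ∧
    ((IsLocalRing.maximalIdeal R ≤ (Ideal.span (Set.range x)).radical ∧
        ringKrullDim R = d) →
      ∀ m : M, (∃ k : ℕ, x ⟨0, hd⟩ ^ k • m = 0) →
        ∃ k : ℕ, ∀ r ∈ (IsLocalRing.maximalIdeal R) ^ k, r • m = 0) := by
    classical
  set i0 : Fin d := ⟨0, hd⟩ with hi0
  have key : ∀ (n : Fin d → ℕ), (∀ i, 0 < n i) → ∀ i j : Fin d, i ≤ j →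
      ∀ m : M, (x i ^ n i * x j ^ n j) • m = 0 → (x j ^ n j) • m = 0 := by
    intro n hn i j hij m hm
    have hne : (∅ : Finset (Fin d)) ≠ Finset.univ := by
      have : Nonempty (Fin d) := ⟨i0⟩
      exact (Finset.univ_nonempty.ne_empty).symm
    have h := hx n hn ∅ hne i j (Finset.notMem_empty i) (Finset.notMem_empty j) hij
    simp only [Finset.coe_empty, Set.image_empty, Ideal.span_empty,
      Submodule.bot_smul] at h
    have hmem : m ∈ Submodule.comap (LinearMap.lsmul R M (x i ^ n i * x j ^ n j))
        (⊥ : Submodule R M) := by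
      simpa [Submodule.mem_comap] using hm
    rw [h] at hmem
    simpa [Submodule.mem_comap] using hmem
  have step : ∀ k : ℕ, ∀ m : M, x i0 ^ k • m = 0 → x i0 • m = 0 := by
    intro k
    induction k using Nat.strong_induction_on with
    | _ k ih =>
      intro m hm
      match k, ih, hm with
      | 0, ih, hm => simp only [pow_zero, one_smul] at hm; simp [hm]
      | 1, ih, hm => simpa using hm
      | (k+2), ih, hm =>
        have h2 : x i0 ^ (2 * (k + 1)) • m = 0 := by
          have : 2 * (k + 1) = k + (k + 2) := by omega
          rw [this, pow_add, mul_smul, hm, smul_zero]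
        have := key (fun _ => k + 1) (fun _ => Nat.succ_pos _) i0 i0 le_rfl m
          (by rwa [← pow_add, ← two_mul])
        exact ih (k + 1) (by omega) m this
  have part1 : ∀ m : M, (∃ k : ℕ, x i0 ^ k • m = 0) → ∀ i : Fin d, x i • m = 0 := by
    rintro m ⟨k, hk⟩ i
    have h0 : x i0 • m = 0 := step k m hk
    have hle : i0 ≤ i := Nat.zero_le _
    have := key (fun _ => 1) (fun _ => Nat.one_pos) i0 i hle m
      (by rw [pow_one, pow_one, mul_comm, mul_smul, h0, smul_zero])
    simpa using this
  refine ⟨part1, ?_⟩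
  rintro ⟨hrad, -⟩ m hm
  have hann : ∀ r ∈ Ideal.span (Set.range x), r • m = 0 := by
    intro r hr
    refine Submodule.span_induction ?_ ?_ ?_ ?_ hr
    · rintro r ⟨i, rfl⟩; exact part1 m hm i
    · simp
    · intro a b _ _ ha hb; rw [add_smul, ha, hb, add_zero]
    · intro c a _ h; rw [smul_eq_mul, mul_smul, h, smul_zero]
  obtain ⟨k, hk⟩ := Ideal.exists_pow_le_of_le_radical_of_fg hrad
    (IsNoetherian.noetherian _)
  exact ⟨k, fun r hr => hann r (hk hr)⟩
end
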